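/- In the setting of the hyperelliptic residue data, the residues A12_n satisfy Σ_{n=1}^N A12_n = 0. -/

import Mathlib

/-!
Clearing the pole of `1/(u - q_j)` against the factor `∏_β (u - q_β)` shows that
`A12_n = P(u_n) / ∏_{m≠n} (u_n - u_m)` for one polynomial `P` of degree at most `2g - 1`,
independent of `n`. Summed over the `N = 2g + 1` distinct nodes `u_n`, such quotients give the
coefficient of `X^(N-1)` in the Lagrange interpolant of `P`, which is `P` itself; so the sum is `0`.
-/

open Finset

/-- The residue `A12^{(n)}` of the function `A₁₂(u)` associated with the differential `Ω`
on the hyperelliptic curve `v² = ∏_{m=1}^N (u − u_m)`, as an explicit rational expression: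
`A12_n = [Σ_j (1/(u_n−q_j) + α_j)·∏_{β≠j}(u_n−q_β)/(w_j·∏_{β≠j}(q_j−q_β))]
          · ∏_β (u_n−q_β) / ∏_{m≠n}(u_n−u_m)`. -/
noncomputable def A12res {g N : ℕ} (u : Fin N → ℂ) (q w a : Fin g → ℂ) (n : Fin N) : ℂ :=
  (∑ j, (1 / (u n - q j) + a j) * (∏ β ∈ univ.erase j, (u n - q β)) /
      (w j * ∏ β ∈ univ.erase j, (q j - q β))) *
    (∏ β, (u n - q β)) / ∏ m ∈ univ.erase n, (u n - u m)

/-- The value `Ω_∞ = Ω(P_∞) = −2·Σ_j α_j/(w_j·∏_{β≠j}(q_j−q_β))`. -/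
noncomputable def OmegaInfty {g : ℕ} (q w a : Fin g → ℂ) : ℂ :=
  -2 * ∑ j, a j / (w j * ∏ β ∈ univ.erase j, (q j - q β))

/-- The coefficient
`β_n = A12_n·(Σ_j 1/(w_j·(u_n−q_j)·∏_{β≠j}(q_j−q_β)) − Ω_∞/2)`. -/
noncomputable def betaCoef {g N : ℕ} (u : Fin N → ℂ) (q w a : Fin g → ℂ) (n : Fin N) : ℂ :=
  A12res u q w a n *
    ((∑ j, 1 / (w j * (u n - q j) * ∏ β ∈ univ.erase j, (q j - q β))) -
      OmegaInfty q w a / 2)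

open Polynomial Lagrange

theorem Lagrange.sum_eval_div_prod_sub_eq_zero {F ι : Type*} [Field F] [DecidableEq ι]
    {s : Finset ι} {v : ι → F} (hvs : Set.InjOn v s) {P : F[X]} (hP : P.degree < ↑(#s - 1)) :
    ∑ i ∈ s, P.eval (v i) / ∏ j ∈ s.erase i, (v i - v j) = 0 := by
  have hP' : P.degree < #s := hP.trans_le (by exact_mod_cast Nat.sub_le _ _)
  rw [← coeff_eq_sum hvs hP', coeff_eq_zero_of_degree_lt hP]

section

variable {K : Type*} [Field K] {g : ℕ}

noncomputable def a12Numerator (q w a : Fin g → K) : K[X] :=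
  ∑ j, C (w j * ∏ β ∈ univ.erase j, (q j - q β))⁻¹ *
    (nodal (univ.erase j) q * (nodal (univ.erase j) q + C (a j) * nodal univ q))

theorem degree_a12Numerator_lt (q w a : Fin g → K) : (a12Numerator q w a).degree < ↑(2 * g) := by
  refine (degree_sum_le _ _).trans_lt <| (Finset.sup_lt_iff (WithBot.bot_lt_coe _)).2 fun j _ => ?_
  have hE : (nodal (univ.erase j) q).natDegree = g - 1 := by simp [natDegree_nodal]
  have hF : (nodal univ q).natDegree = g := by simp [natDegree_nodal]
  have hterm : (C (w j * ∏ β ∈ univ.erase j, (q j - q β))⁻¹ *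
      (nodal (univ.erase j) q * (nodal (univ.erase j) q + C (a j) * nodal univ q))).natDegree
      ≤ (g - 1) + max (g - 1) g := by
    refine natDegree_C_mul_le _ _ |>.trans <| natDegree_mul_le.trans <| add_le_add hE.le ?_
    refine natDegree_add_le _ _ |>.trans <| max_le_max hE.le ?_
    exact natDegree_C_mul_le _ _ |>.trans hF.le
  refine degree_le_natDegree.trans_lt ?_
  exact_mod_cast hterm.trans_lt (by have := j.pos; omega)

theorem eval_a12Numerator (q w a : Fin g → K) {x : K} (hx : ∀ j, x ≠ q j) :
    (a12Numerator q w a).eval x =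
      (∑ j, (1 / (x - q j) + a j) * (∏ β ∈ univ.erase j, (x - q β)) /
        (w j * ∏ β ∈ univ.erase j, (q j - q β))) * ∏ β, (x - q β) := by
  rw [a12Numerator, eval_finsetSum, Finset.sum_mul]
  refine Finset.sum_congr rfl fun j _ => ?_
  have hxj : x - q j ≠ 0 := sub_ne_zero.2 (hx j)
  simp only [eval_mul, eval_add, eval_C, eval_nodal,
    ← Finset.mul_prod_erase univ (fun β => x - q β) (mem_univ j)]
  field_simp

end

theorem sum_A12_eq_zero_general {g N : ℕ} (hN : N = 2 * g + 1)
    (u : Fin N → ℂ) (q w a : Fin g → ℂ)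
    (hu : ∀ m n : Fin N, m ≠ n → u m ≠ u n)
    (hqu : ∀ (j : Fin g) (n : Fin N), q j ≠ u n) :
    ∑ n, A12res u q w a n = 0 := by
  have hinj : Set.InjOn u (univ : Finset (Fin N)) := fun m _ n _ h =>
    by_contra fun hmn => hu m n hmn h
  have hdeg : (a12Numerator q w a).degree < ↑(#(univ : Finset (Fin N)) - 1) := by
    simpa [hN] using degree_a12Numerator_lt q w a
  calc ∑ n, A12res u q w a n
      = ∑ n, (a12Numerator q w a).eval (u n) / ∏ m ∈ univ.erase n, (u n - u m) :=
        Finset.sum_congr rfl fun n _ => by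
          rw [A12res, eval_a12Numerator q w a fun j => (hqu j n).symm]
    _ = 0 := sum_eval_div_prod_sub_eq_zero hinj hdeg

/-- In the setting of the hyperelliptic residue data, the residues `A12_n` sum to zero. -/
theorem sum_A12_eq_zero {g N : ℕ} (hg : 1 ≤ g) (hN : N = 2 * g + 1)
    (u : Fin N → ℂ) (q w a : Fin g → ℂ)
    (hu : ∀ m n : Fin N, m ≠ n → u m ≠ u n)
    (hq : ∀ i j : Fin g, i ≠ j → q i ≠ q j)
    (hqu : ∀ (j : Fin g) (n : Fin N), q j ≠ u n)
    (hw : ∀ j, (w j) ^ 2 * ∏ m, (q j - u m) = 1) :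
    ∑ n, A12res u q w a n = 0 :=
  sum_A12_eq_zero_general hN u q w a hu hqu
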